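/- arXiv:2405.16255 — 2 statements merged into one kernel-verified Lean document; each statement's English description precedes it below -/
import Mathlib

section
/- The map φ : E → E on a real inner product space E defined by φ(x) = x / √(‖x‖² + 1) is Lipschitz continuous with Lipschitz constant 1. -/
/-- The GeoAdaLer normalization map `x ↦ x / √(‖x‖² + 1)` on a real inner product space
is Lipschitz continuous with constant 1. -/
theorem geo_normalization_lipschitz {E : Type*} [NormedAddCommGroup E]
    [InnerProductSpace ℝ E] :
    LipschitzWith 1 (fun x : E => (Real.sqrt (‖x‖ ^ 2 + 1))⁻¹ • x) := by
  rw [lipschitzWith_iff_dist_le_mul]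
  intro x y
  simp only [dist_eq_norm, NNReal.coe_one, one_mul]
  set A := ‖x‖ with hA
  set B := ‖y‖ with hB
  set t := inner (𝕜 := ℝ) x y with ht
  set a := Real.sqrt (A ^ 2 + 1) with ha
  set b := Real.sqrt (B ^ 2 + 1) with hb
  have hA0 : 0 ≤ A := norm_nonneg _
  have hB0 : 0 ≤ B := norm_nonneg _
  have ha2 : a ^ 2 = A ^ 2 + 1 := Real.sq_sqrt (by positivity)
  have hb2 : b ^ 2 = B ^ 2 + 1 := Real.sq_sqrt (by positivity)
  have ha0 : 0 ≤ a := Real.sqrt_nonneg _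
  have hb0 : 0 ≤ b := Real.sqrt_nonneg _
  have ha1 : 1 ≤ a := by nlinarith
  have hb1 : 1 ≤ b := by nlinarith
  have htub : t ≤ A * B := real_inner_le_norm x y
  have htlb : -(A * B) ≤ t := by
    have := real_inner_le_norm (-x) y
    simp only [inner_neg_left, norm_neg] at this
    linarith
  have hab : A * B + 1 ≤ a * b := by
    nlinarith [sq_nonneg (A - B), mul_pos (lt_of_lt_of_le one_pos ha1) (lt_of_lt_of_le one_pos hb1)]
  have h1 : ‖a⁻¹ • x - b⁻¹ • y‖ ^ 2
      = a⁻¹ ^ 2 * A ^ 2 - 2 * (a⁻¹ * (b⁻¹ * t)) + b⁻¹ ^ 2 * B ^ 2 := by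
    rw [@norm_sub_sq_real, real_inner_smul_left, real_inner_smul_right, norm_smul, norm_smul]
    simp [mul_pow, Real.norm_eq_abs, abs_of_nonneg (inv_nonneg.mpr ha0),
      abs_of_nonneg (inv_nonneg.mpr hb0)]
    rfl
  have h2 : ‖x - y‖ ^ 2 = A ^ 2 - 2 * t + B ^ 2 := by
    rw [@norm_sub_sq_real]
  have hane : a ≠ 0 := by positivity
  have hbne : b ≠ 0 := by positivity
  have key : ‖a⁻¹ • x - b⁻¹ • y‖ ^ 2 ≤ ‖x - y‖ ^ 2 := by
    rw [h1, h2]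
    rw [show a⁻¹ ^ 2 * A ^ 2 - 2 * (a⁻¹ * (b⁻¹ * t)) + b⁻¹ ^ 2 * B ^ 2
        = (A ^ 2 * b ^ 2 - 2 * (t * (a * b)) + B ^ 2 * a ^ 2) / (a ^ 2 * b ^ 2) from by
      field_simp]
    rw [div_le_iff₀ (by positivity : (0:ℝ) < a ^ 2 * b ^ 2)]
    have hc0 : 1 ≤ a * b := le_trans (by nlinarith) hab
    have hint1 : 0 ≤ (A * B - t) * ((a * b) ^ 2 - a * b) :=
      mul_nonneg (by linarith) (by nlinarith)
    have hint2 : 0 ≤ A * B * (a * b - (A * B + 1)) :=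
      mul_nonneg (by positivity) (by linarith)
    have hint3 : 0 ≤ (A - B) ^ 2 * (A ^ 2 * B ^ 2 + A ^ 2 + B ^ 2) :=
      mul_nonneg (sq_nonneg _) (by positivity)
    have hc2 : (a * b) ^ 2 = (A ^ 2 + 1) * (B ^ 2 + 1) := by
      rw [mul_pow, ha2, hb2]
    have hc2t : t * (a * b) ^ 2 = t * ((A ^ 2 + 1) * (B ^ 2 + 1)) := by rw [hc2]
    have hc2ab : A * B * (a * b) ^ 2 = A * B * ((A ^ 2 + 1) * (B ^ 2 + 1)) := by rw [hc2]
    rw [ha2, hb2]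
    linarith [hint1, hint2, hint3, hc2t, hc2ab]
  have := Real.sqrt_le_sqrt key
  rwa [Real.sqrt_sq (norm_nonneg _), Real.sqrt_sq (norm_nonneg _)] at this
end

section
/- Let E be a real inner product space and let g : E → E be Lipschitz continuous with constant L ≥ 0. Then the map x ↦ g(x) / √(‖g(x)‖² + 1) is Lipschitz continuous with constant L. -/
private lemma geo_key (s t P r : ℝ) (hs : 0 ≤ s) (hts : t ≤ s) (hP : 2*s ≤ P)
    (hr2 : r^2 = s^2+P+1) (hr : s+1 ≤ r) :
    2*t*r*(r-1) ≤ s^2*P + P^2 - 2*s^2 := by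
  rcases le_or_gt t 0 with h | h
  · nlinarith [mul_nonneg (mul_nonneg (neg_nonneg.2 h) (by nlinarith : (0:ℝ) ≤ r)) (by nlinarith : (0:ℝ) ≤ r - 1), sq_nonneg s, sq_nonneg (s-P), mul_nonneg hs (by linarith : (0:ℝ) ≤ P)]
  · have ht0 : (0:ℝ) ≤ t := le_of_lt h
    have h1 : 2*t*r*(r-1) ≤ 2*t*r^2 - 2*t*(t+1) := by nlinarith
    rcases le_or_gt (2*t+2) P with hc | hc
    · nlinarith [mul_nonneg (by nlinarith : (0:ℝ) ≤ s^2 - t^2) (by linarith : (0:ℝ) ≤ P - 2*t - 2), mul_nonneg (by nlinarith : (0:ℝ) ≤ t^2 + P) (by linarith : (0:ℝ) ≤ P - 2*t)]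
    · nlinarith [mul_nonneg (by nlinarith [sq_nonneg (P-2*s)] : (0:ℝ) ≤ P^2/4 - s^2) (by linarith : (0:ℝ) ≤ 2*t + 2 - P), mul_nonneg (sq_nonneg P) (by linarith : (0:ℝ) ≤ P - 2*t), sq_nonneg (P - 2*t)]

private lemma geo_main (A B t α β : ℝ) (hA0 : 0 ≤ A) (hB0 : 0 ≤ B)
    (hα2 : α^2 = A+1) (hβ2 : β^2 = B+1) (hα1 : 1 ≤ α) (hβ1 : 1 ≤ β)
    (ht2 : t^2 ≤ A*B) :
    α⁻¹^2 * A + β⁻¹^2 * B - 2 * (α⁻¹ * β⁻¹ * t) ≤ A + B - 2*t := by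
  set s := Real.sqrt (A*B) with hsdef
  have hs0 : 0 ≤ s := Real.sqrt_nonneg _
  have hs2 : s^2 = A*B := Real.sq_sqrt (mul_nonneg hA0 hB0)
  have hts : t ≤ s := by nlinarith
  have hP : 2*s ≤ A + B := by nlinarith [sq_nonneg (Real.sqrt A - Real.sqrt B), Real.sq_sqrt hA0, Real.sq_sqrt hB0, Real.sqrt_nonneg A, Real.sqrt_nonneg B, Real.sqrt_mul_self (mul_nonneg hA0 hB0), Real.sqrt_mul hA0 B]
  have hα0 : 0 < α := by linarith
  have hβ0 : 0 < β := by linarith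
  set r := α * β with hrdef
  have hr0 : 0 < r := mul_pos hα0 hβ0
  have hr2 : r^2 = s^2 + (A+B) + 1 := by rw [hrdef, mul_pow, hα2, hβ2, hs2]; ring
  have hr : s + 1 ≤ r := by nlinarith
  have key := geo_key s t (A+B) r hs0 hts hP hr2 hr
  have main : A*β^2 + B*α^2 - 2*t*r ≤ (A + B - 2*t)*r^2 := by nlinarith
  have hdiv : (A*β^2 + B*α^2 - 2*t*r)/r^2 ≤ A + B - 2*t :=
    (div_le_iff₀ (by positivity)).2 main
  have heq : α⁻¹^2 * A + β⁻¹^2 * B - 2 * (α⁻¹ * β⁻¹ * t)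
      = (A*β^2 + B*α^2 - 2*t*r)/r^2 := by
    rw [hrdef]; field_simp
  rw [heq]; exact hdiv

private lemma geo_phi_lipschitz {E : Type*} [NormedAddCommGroup E] [InnerProductSpace ℝ E] :
    LipschitzWith 1 (fun y : E => (Real.sqrt (‖y‖ ^ 2 + 1))⁻¹ • y) := by
  apply LipschitzWith.of_dist_le_mul
  intro a b
  simp only [dist_eq_norm, NNReal.coe_one, one_mul]
  have hα2 : (Real.sqrt (‖a‖^2 + 1))^2 = ‖a‖^2 + 1 := Real.sq_sqrt (by positivity)
  have hβ2 : (Real.sqrt (‖b‖^2 + 1))^2 = ‖b‖^2 + 1 := Real.sq_sqrt (by positivity)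
  have hα1 : 1 ≤ Real.sqrt (‖a‖^2 + 1) := by nlinarith [Real.sqrt_nonneg (‖a‖^2+1)]
  have hβ1 : 1 ≤ Real.sqrt (‖b‖^2 + 1) := by nlinarith [Real.sqrt_nonneg (‖b‖^2+1)]
  have ht2 : (inner ℝ a b : ℝ)^2 ≤ ‖a‖^2 * ‖b‖^2 := by
    nlinarith [abs_real_inner_le_norm a b, abs_nonneg (inner ℝ a b : ℝ), sq_abs (inner ℝ a b : ℝ), mul_nonneg (norm_nonneg a) (norm_nonneg b)]
  have main := geo_main (‖a‖^2) (‖b‖^2) (inner ℝ a b) _ _ (sq_nonneg _) (sq_nonneg _)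
    hα2 hβ2 hα1 hβ1 ht2
  have hα0 : (0:ℝ) < Real.sqrt (‖a‖^2 + 1) := by linarith
  have hβ0 : (0:ℝ) < Real.sqrt (‖b‖^2 + 1) := by linarith
  have hsub : ‖(Real.sqrt (‖a‖^2+1))⁻¹ • a - (Real.sqrt (‖b‖^2+1))⁻¹ • b‖^2
      = (Real.sqrt (‖a‖^2+1))⁻¹^2 * ‖a‖^2 + (Real.sqrt (‖b‖^2+1))⁻¹^2 * ‖b‖^2
        - 2 * ((Real.sqrt (‖a‖^2+1))⁻¹ * (Real.sqrt (‖b‖^2+1))⁻¹ * (inner ℝ a b : ℝ)) := by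
    rw [norm_sub_sq_real, norm_smul, norm_smul, real_inner_smul_left, real_inner_smul_right]
    simp only [Real.norm_eq_abs, abs_of_nonneg (le_of_lt (inv_pos.2 hα0)),
      abs_of_nonneg (le_of_lt (inv_pos.2 hβ0))]
    ring
  have hab : ‖a - b‖^2 = ‖a‖^2 + ‖b‖^2 - 2*(inner ℝ a b : ℝ) := by
    rw [norm_sub_sq_real]; ring
  have hsq : ‖(Real.sqrt (‖a‖^2+1))⁻¹ • a - (Real.sqrt (‖b‖^2+1))⁻¹ • b‖^2 ≤ ‖a - b‖^2 := by
    rw [hsub, hab]; exact main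
  calc ‖(Real.sqrt (‖a‖^2+1))⁻¹ • a - (Real.sqrt (‖b‖^2+1))⁻¹ • b‖
      = Real.sqrt (‖(Real.sqrt (‖a‖^2+1))⁻¹ • a - (Real.sqrt (‖b‖^2+1))⁻¹ • b‖^2) := by
        rw [Real.sqrt_sq (norm_nonneg _)]
    _ ≤ Real.sqrt (‖a - b‖^2) := Real.sqrt_le_sqrt hsq
    _ = ‖a - b‖ := Real.sqrt_sq (norm_nonneg _)

/-- If `g : E → E` is Lipschitz with constant `L ≥ 0` on a real inner product space, then
`x ↦ g x / √(‖g x‖² + 1)` is Lipschitz with constant `L`. -/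
theorem geo_normalized_gradient_lipschitz {E : Type*} [NormedAddCommGroup E]
    [InnerProductSpace ℝ E] (g : E → E) (L : NNReal) (hg : LipschitzWith L g) :
    LipschitzWith L (fun x : E => (Real.sqrt (‖g x‖ ^ 2 + 1))⁻¹ • g x) := by
  have h := (geo_phi_lipschitz (E := E)).comp hg
  rwa [one_mul] at h
end
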